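/- arXiv:2406.17330 — 4 statements merged into one kernel-verified Lean document; each statement's English description precedes it below -/
import Mathlib

section
/- Let G be a connected graph with Perron vector x of its adjacency matrix, and let u, v be two distinct vertices. If N_G(v)\{u} is a proper subset of N_G(u)\{v}, then x_u > x_v. -/
open Matrix BigOperators

open scoped Classical in
noncomputable def adjMat {V : Type*} [Fintype V] (G : SimpleGraph V) : Matrix V V ℝ :=
  Matrix.of fun a b => if G.Adj a b then (1 : ℝ) else 0

/-- `x` is the Perron vector of the adjacency matrix of `G`, with corresponding
eigenvalue `ρ`, the spectral radius (largest eigenvalue). -/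
def IsPerronVector {V : Type*} [Fintype V] [DecidableEq V] (G : SimpleGraph V)
    (x : V → ℝ) (ρ : ℝ) : Prop :=
  (∀ v, 0 < x v) ∧ (∑ v, (x v) ^ 2 = 1) ∧ (adjMat G *ᵥ x = ρ • x) ∧
    IsGreatest {t : ℝ | Module.End.HasEigenvalue (Matrix.toLin' (adjMat G)) t} ρ

theorem stmt0 {n : ℕ} (G : SimpleGraph (Fin n)) (hG : G.Connected)
    (x : Fin n → ℝ) (ρ : ℝ) (hx : IsPerronVector G x ρ)
    (u v : Fin n) (huv : u ≠ v)
    (h : G.neighborSet v \ {u} ⊂ G.neighborSet u \ {v}) :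
    x v < x u := by
  classical
  obtain ⟨hpos, -, heig, -⟩ := hx
  have key : ∀ w, ∑ b, (if G.Adj w b then x b else 0) = ρ * x w := by
    intro w
    have := congrFun heig w
    simpa [adjMat, Matrix.mulVec, dotProduct, ite_mul] using this
  -- the extra neighbor of u
  obtain ⟨w0, hw0u, hw0v⟩ := Set.exists_of_ssubset h
  have hadjuw0 : G.Adj u w0 := hw0u.1
  have hw0nv : w0 ≠ v := by simpa using hw0u.2
  have hw0nu : w0 ≠ u := hadjuw0.ne'
  have hnadjvw0 : ¬ G.Adj v w0 := by
    intro hc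
    exact hw0v ⟨hc, by simpa using hw0nu⟩
  set s : Finset (Fin n) := Finset.univ \ {u, v} with hs
  have hsplit : ∀ w, ρ * x w =
      (∑ b ∈ s, (if G.Adj w b then x b else 0)) +
      ((if G.Adj w u then x u else 0) + (if G.Adj w v then x v else 0)) := by
    intro w
    rw [← key w, ← Finset.sum_sdiff (Finset.subset_univ ({u, v} : Finset (Fin n))),
      Finset.sum_pair huv]
  have hw0s : w0 ∈ s := by
    simp [hs, hw0nu, hw0nv]
  have hlt : (∑ b ∈ s, (if G.Adj v b then x b else 0)) <
      (∑ b ∈ s, (if G.Adj u b then x b else 0)) := by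
    apply Finset.sum_lt_sum
    · intro b hb
      have hbu : b ≠ u := by simp [hs] at hb; tauto
      by_cases hvb : G.Adj v b
      · have : b ∈ G.neighborSet v \ {u} := ⟨hvb, by simpa using hbu⟩
        have hub : G.Adj u b := (h.1 this).1
        simp [hvb, hub]
      · simp only [hvb, if_neg, if_false]
        split <;> [exact (hpos b).le; exact le_refl 0]
    · exact ⟨w0, hw0s, by simp [hnadjvw0, hadjuw0, hpos w0]⟩
  have hρ : 0 < ρ := by
    have hsum : 0 < ∑ b, (if G.Adj u b then x b else 0) := by
      apply Finset.sum_pos'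
      · intro b _; split <;> [exact (hpos b).le; exact le_refl 0]
      · exact ⟨w0, Finset.mem_univ _, by simp [hadjuw0, hpos w0]⟩
    rw [key u] at hsum
    by_contra hc
    push_neg at hc
    nlinarith [hpos u]
  have hu := hsplit u
  have hv := hsplit v
  rw [if_neg (G.irrefl)] at hu hv
  rw [G.adj_comm v u] at hv
  by_contra hle
  push_neg at hle
  by_cases hadj : G.Adj u v
  · rw [if_pos hadj] at hu hv
    nlinarith [mul_nonneg hρ.le (sub_nonneg.2 hle)]
  · rw [if_neg hadj] at hu hv
    nlinarith [mul_nonneg hρ.le (sub_nonneg.2 hle)]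
end

section
/- Let G be a connected graph with Perron vector x, and let u, v be vertices of G. Suppose v_1,…,v_s are vertices in N_G(v)\N_G(u) with 1 ≤ s ≤ d_G(v), and let G* be the graph obtained from G by deleting the edges v v_i and adding the edges u v_i for 1 ≤ i ≤ s. If x(u) ≥ x(v), then ρ(G) < ρ(G*). -/
open Matrix BigOperators

/-- The spectral radius of a real symmetric matrix: the largest (real) eigenvalue. -/
noncomputable def specRad {V : Type*} [Fintype V] [DecidableEq V] (M : Matrix V V ℝ) : ℝ :=
  sSup {t : ℝ | Module.End.HasEigenvalue (Matrix.toLin' M) t}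

/-!
Let `W = {v₁, …, vₛ}` and let `S_c` be the star joining `c` to `W`. Then
`A(G*) = A(G) - A(S_v) + A(S_u)`, and since `A(G) x = ρ x`,
`xᵀ A(G*) x = ρ ‖x‖² + 2 (x u - x v) ∑_{w ∈ W} x w ≥ ρ ‖x‖²`.
If `ρ(G*) ≤ ρ`, then `ρ I - A(G*)` is positive semidefinite with `xᵀ (ρ I - A(G*)) x ≤ 0`,
so `x` lies in its kernel and is an eigenvector of `A(G*)` for `ρ`. This fails at `v`:
`(A(G*) x) v = ρ x v - ∑_{w ∈ W} x w < ρ x v`.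
-/

section SpectralRadius

variable {ι : Type*} [Fintype ι] [DecidableEq ι] {M : Matrix ι ι ℝ}

theorem specRad_eq_sSup_spectrum : specRad M = sSup (spectrum ℝ M) := by
  simp only [specRad, Module.End.hasEigenvalue_iff_mem_spectrum, Matrix.spectrum_toLin']
  rfl

theorem le_specRad_of_mem_spectrum {t : ℝ} (ht : t ∈ spectrum ℝ M) : t ≤ specRad M :=
  specRad_eq_sSup_spectrum (M := M) ▸ le_csSup M.finite_spectrum.bddAbove ht

theorem Matrix.IsHermitian.posSemidef_smul_one_sub {r : ℝ} (hM : M.IsHermitian)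
    (hr : specRad M ≤ r) : (r • 1 - M).PosSemidef := by
  refine posSemidef_iff_isHermitian_and_spectrum_nonneg.mpr
    ⟨(isHermitian_one.smul (IsSelfAdjoint.all r)).sub hM, ?_⟩
  rw [← Algebra.algebraMap_eq_smul_one, ← spectrum.singleton_sub_eq]
  rintro _ ⟨_, rfl, t, ht, rfl⟩
  simpa using (le_specRad_of_mem_spectrum ht).trans hr

theorem Matrix.IsHermitian.lt_specRad_of_le_dotProduct_mulVec {r : ℝ} {y : ι → ℝ}
    (hM : M.IsHermitian) (hr : r * (y ⬝ᵥ y) ≤ y ⬝ᵥ M *ᵥ y) (hy : M *ᵥ y ≠ r • y) :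
    r < specRad M := by
  by_contra! h
  have hP := hM.posSemidef_smul_one_sub h
  have hnonneg := (posSemidef_iff_dotProduct_mulVec.mp hP).2 y
  have hzero : star y ⬝ᵥ (r • 1 - M) *ᵥ y = 0 := by
    simp only [star_trivial, sub_mulVec, smul_mulVec, one_mulVec, dotProduct_sub,
      dotProduct_smul, smul_eq_mul] at hnonneg ⊢
    linarith
  rw [hP.dotProduct_mulVec_zero_iff, sub_mulVec, smul_mulVec, one_mulVec, sub_eq_zero] at hzero
  exact hy hzero.symm

end SpectralRadius

section AdjMat

variable {V : Type*} [Fintype V] {G H : SimpleGraph V}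

theorem adjMat_sup_of_disjoint (h : Disjoint G H) : adjMat (G ⊔ H) = adjMat G + adjMat H := by
  ext a b
  have hGH : G.Adj a b → ¬H.Adj a b := SimpleGraph.disjoint_left.mp h a b
  simp only [adjMat, of_apply, Matrix.add_apply, SimpleGraph.sup_adj]
  by_cases hG : G.Adj a b <;> by_cases hH : H.Adj a b <;> simp_all

theorem adjMat_sdiff_of_le (h : H ≤ G) : adjMat (G \ H) = adjMat G - adjMat H := by
  ext a b
  have hHG : H.Adj a b → G.Adj a b := fun hH => h hH
  simp only [adjMat, of_apply, Matrix.sub_apply, SimpleGraph.sdiff_adj]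
  by_cases hG : G.Adj a b <;> by_cases hH : H.Adj a b <;> simp_all

theorem adjMat_isHermitian (G : SimpleGraph V) : (adjMat G).IsHermitian := by
  ext a b
  simp only [adjMat, conjTranspose_apply, of_apply, star_trivial]
  rw [G.adj_comm]

end AdjMat

def starGraphOn {V : Type*} (c : V) (W : Finset V) : SimpleGraph V :=
  SimpleGraph.fromEdgeSet ((fun b => s(c, b)) '' W)

section StarGraphOn

variable {V : Type*} {c : V} {W : Finset V}

theorem starGraphOn_adj {a b : V} :
    (starGraphOn c W).Adj a b ↔ (a = c ∧ b ∈ W ∨ b = c ∧ a ∈ W) ∧ a ≠ b := by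
  simp only [starGraphOn, SimpleGraph.fromEdgeSet_adj, Set.mem_image, Finset.mem_coe, Sym2.eq_iff]
  aesop

theorem starGraphOn_le {G : SimpleGraph V} (h : ∀ b ∈ W, G.Adj c b) :
    starGraphOn c W ≤ G := by
  intro a b hab
  rcases starGraphOn_adj.mp hab with ⟨⟨rfl, hb⟩ | ⟨rfl, ha⟩, -⟩
  exacts [h b hb, (h a ha).symm]

theorem disjoint_starGraphOn {G : SimpleGraph V} (h : ∀ b ∈ W, ¬G.Adj c b) :
    Disjoint G (starGraphOn c W) := by
  rw [SimpleGraph.disjoint_left]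
  intro a b hab hstar
  rcases starGraphOn_adj.mp hstar with ⟨⟨rfl, hb⟩ | ⟨rfl, ha⟩, -⟩
  exacts [h b hb hab, h a ha hab.symm]

variable [Fintype V] [DecidableEq V]

theorem adjMat_starGraphOn_mulVec_apply (hc : c ∉ W) (x : V → ℝ) (a : V) :
    (adjMat (starGraphOn c W) *ᵥ x) a
      = (if a = c then ∑ b ∈ W, x b else 0) + (if a ∈ W then x c else 0) := by
  have hadj : ∀ b, (starGraphOn c W).Adj a b ↔ a = c ∧ b ∈ W ∨ b = c ∧ a ∈ W := by
    intro b
    rw [starGraphOn_adj, and_iff_left_iff_imp]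
    rintro (⟨rfl, hb⟩ | ⟨rfl, ha⟩) rfl <;> contradiction
  simp only [mulVec, dotProduct, adjMat, of_apply, hadj]
  by_cases ha : a = c
  · subst ha
    simp [hc, Finset.sum_ite_mem]
  · simp [ha, ite_and]

theorem dotProduct_adjMat_starGraphOn_mulVec (hc : c ∉ W) (x : V → ℝ) :
    x ⬝ᵥ adjMat (starGraphOn c W) *ᵥ x = 2 * x c * ∑ b ∈ W, x b := by
  simp only [dotProduct, adjMat_starGraphOn_mulVec_apply hc, mul_add, mul_ite, mul_zero,
    Finset.sum_add_distrib, Finset.sum_ite_eq', Finset.mem_univ, if_true, Finset.sum_ite_mem,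
    Finset.univ_inter]
  rw [← Finset.sum_mul]
  ring

end StarGraphOn

def moveEdges {V : Type*} (G : SimpleGraph V) (v u : V) (W : Finset V) : SimpleGraph V :=
  (G \ starGraphOn v W) ⊔ starGraphOn u W

section MoveEdges

variable {V : Type*} {G : SimpleGraph V} {u v : V} {W : Finset V}

theorem fromEdgeSet_eq_moveEdges [DecidableEq V] {ι : Type*} [Fintype ι] (w : ι → V) :
    SimpleGraph.fromEdgeSet
        ((G.edgeSet \ Set.range fun i => s(v, w i)) ∪ Set.range fun i => s(u, w i))
      = moveEdges G v u (Finset.univ.image w) := by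
  have hstar : ∀ c, SimpleGraph.fromEdgeSet (Set.range fun i => s(c, w i))
      = starGraphOn c (Finset.univ.image w) := by
    intro c
    simp [starGraphOn, ← Set.range_comp, Function.comp_def]
  rw [SimpleGraph.fromEdgeSet_union, SimpleGraph.fromEdgeSet_sdiff,
    SimpleGraph.fromEdgeSet_edgeSet, hstar, hstar, moveEdges]

variable [Fintype V]

theorem adjMat_moveEdges (hv : ∀ b ∈ W, G.Adj v b) (hu : ∀ b ∈ W, ¬G.Adj u b) :
    adjMat (moveEdges G v u W)
      = adjMat G - adjMat (starGraphOn v W) + adjMat (starGraphOn u W) := by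
  rw [moveEdges, adjMat_sup_of_disjoint ((disjoint_starGraphOn hu).mono_left sdiff_le),
    adjMat_sdiff_of_le (starGraphOn_le hv)]

variable [DecidableEq V]

theorem dotProduct_adjMat_moveEdges_mulVec (hv : ∀ b ∈ W, G.Adj v b)
    (hu : ∀ b ∈ W, ¬G.Adj u b) (huW : u ∉ W) (x : V → ℝ) :
    x ⬝ᵥ adjMat (moveEdges G v u W) *ᵥ x
      = x ⬝ᵥ adjMat G *ᵥ x + 2 * (x u - x v) * ∑ b ∈ W, x b := by
  have hvW : v ∉ W := fun h => (hv v h).ne rfl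
  rw [adjMat_moveEdges hv hu, add_mulVec, sub_mulVec, dotProduct_add, dotProduct_sub,
    dotProduct_adjMat_starGraphOn_mulVec hvW, dotProduct_adjMat_starGraphOn_mulVec huW]
  ring

theorem adjMat_moveEdges_mulVec_apply_left (hv : ∀ b ∈ W, G.Adj v b)
    (hu : ∀ b ∈ W, ¬G.Adj u b) (huW : u ∉ W) (huv : u ≠ v) (x : V → ℝ) :
    (adjMat (moveEdges G v u W) *ᵥ x) v = (adjMat G *ᵥ x) v - ∑ b ∈ W, x b := by
  have hvW : v ∉ W := fun h => (hv v h).ne rfl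
  simp [adjMat_moveEdges hv hu, add_mulVec, sub_mulVec, adjMat_starGraphOn_mulVec_apply, hvW,
    huW, huv.symm]

end MoveEdges

theorem stmt3_general {n : ℕ} (G : SimpleGraph (Fin n))
    (x : Fin n → ℝ) (ρ : ℝ) (hx : IsPerronVector G x ρ)
    (u v : Fin n) (s : ℕ) (hs1 : 1 ≤ s)
    (w : Fin s → Fin n)
    (hw : ∀ i, w i ∈ G.neighborSet v \ G.neighborSet u) (hwu : ∀ i, w i ≠ u)
    (Gstar : SimpleGraph (Fin n))
    (hGstar : Gstar = SimpleGraph.fromEdgeSet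
      ((G.edgeSet \ Set.range fun i => s(v, w i)) ∪ Set.range fun i => s(u, w i)))
    (hxuv : x v ≤ x u) :
    specRad (adjMat G) < specRad (adjMat Gstar) := by
  obtain ⟨hxpos, -, hxeig, hρ⟩ := hx
  rw [hGstar, fromEdgeSet_eq_moveEdges, show specRad (adjMat G) = ρ from hρ.csSup_eq]
  set W := Finset.univ.image w
  have hv : ∀ b ∈ W, G.Adj v b := by simpa [W] using fun i => (hw i).1
  have hu : ∀ b ∈ W, ¬G.Adj u b := by simpa [W] using fun i => (hw i).2
  have huW : u ∉ W := by simpa [W] using hwu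
  have hW : W.Nonempty := ⟨w ⟨0, hs1⟩, Finset.mem_image_of_mem w (Finset.mem_univ _)⟩
  have huv : u ≠ v := fun h => hu _ hW.choose_spec (h ▸ hv _ hW.choose_spec)
  have hsum : 0 < ∑ b ∈ W, x b := Finset.sum_pos (fun b _ => hxpos b) hW
  refine (adjMat_isHermitian _).lt_specRad_of_le_dotProduct_mulVec (y := x) ?_ fun h => ?_
  · rw [dotProduct_adjMat_moveEdges_mulVec hv hu huW, hxeig, dotProduct_smul, smul_eq_mul]
    nlinarith
  · have hrow := congrFun h v
    rw [adjMat_moveEdges_mulVec_apply_left hv hu huW huv, hxeig] at hrow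
    simp only [Pi.smul_apply, smul_eq_mul] at hrow
    linarith

theorem stmt3 {n : ℕ} (G : SimpleGraph (Fin n)) (hG : G.Connected)
    (x : Fin n → ℝ) (ρ : ℝ) (hx : IsPerronVector G x ρ)
    (u v : Fin n) (s : ℕ) (hs1 : 1 ≤ s) (hsd : s ≤ (G.neighborSet v).ncard)
    (w : Fin s → Fin n) (hinj : Function.Injective w)
    (hw : ∀ i, w i ∈ G.neighborSet v \ G.neighborSet u) (hwu : ∀ i, w i ≠ u)
    (Gstar : SimpleGraph (Fin n))
    (hGstar : Gstar = SimpleGraph.fromEdgeSet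
      ((G.edgeSet \ Set.range fun i => s(v, w i)) ∪ Set.range fun i => s(u, w i)))
    (hxuv : x v ≤ x u) :
    specRad (adjMat G) < specRad (adjMat Gstar) :=
  stmt3_general G x ρ hx u v s hs1 w hw hwu Gstar hGstar hxuv
end

section
/- For positive integers n, k with k ≥ 1 and n ≥ k+4, and for every integer m with 2 ≤ m ≤ n-k-2, the spectral radius of the digraph \vec{G}_n^{k,m} satisfies ρ(\vec{G}_n^{k,m}) = (n-2 + √(4m² - 4(n-k)m + n²))/2, and this is maximized over m exactly when m = 2 or m = n-k-2, giving value (n-2 + √((n-4)² + 8k))/2. -/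
open Matrix BigOperators

open scoped Classical in
/-- The adjacency matrix of a digraph given by its arc relation. -/
noncomputable def adjMatD {V : Type*} [Fintype V] (D : V → V → Prop) : Matrix V V ℝ :=
  Matrix.of fun a b => if D a b then (1 : ℝ) else 0

/-- The spectral radius of a real matrix: the largest modulus of a (complex) eigenvalue. -/
noncomputable def specRadC {V : Type*} [Fintype V] [DecidableEq V] (M : Matrix V V ℝ) : ℝ :=
  sSup {r : ℝ | ∃ μ : ℂ,
    Module.End.HasEigenvalue (Matrix.toLin' (M.map (Complex.ofReal))) μ ∧ r = ‖μ‖}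

/-- The digraph `\vec{G}_n^{k,m} = \vec{K}_k ∇ (\vec{K}_m ∪ \vec{K}_r)` (with `r = n-k-m`)
together with all arcs from the `\vec{K}_m` part to the `\vec{K}_r` part: there are arcs in
both directions between every pair of distinct vertices, except that there is no arc from
the third part to the second part. -/
def GnkmRel (k m r : ℕ) :
    (Fin k ⊕ Fin m ⊕ Fin r) → (Fin k ⊕ Fin m ⊕ Fin r) → Prop :=
  fun a b => a ≠ b ∧ ¬ ∃ (x : Fin r) (y : Fin m), a = Sum.inr (Sum.inr x) ∧ b = Sum.inr (Sum.inl y)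

/-! Every eigenvector of the adjacency matrix for an eigenvalue `μ ≠ -1` is constant on each of
the three parts, so the rest of the spectrum consists of the roots of
`(μ + 1)² - n (μ + 1) + m r = 0` with `r = n - k - m`, and the larger root is the spectral
radius. Its discriminant `n² - 4 m r` falls short of `(n - 4)² + 8 k`, the value at `m = 2`,
by exactly `4 (m - 2) (r - 2)`. -/

open Module End

lemma Fintype.sum_ite_eq_zero_else {ι M : Type*} [Fintype ι] [DecidableEq ι] [AddCommGroup M]
    (f : ι → M) (i : ι) : ∑ x, (if i = x then 0 else f x) = ∑ x, f x - f i := by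
  simp [Finset.sum_ite, Finset.filter_ne, Finset.sum_erase_eq_sub]

lemma four_mul_le_sq_add_add (k m r : ℕ) : 4 * (m : ℝ) * r ≤ ((k : ℝ) + m + r) ^ 2 := by
  nlinarith [sq_nonneg ((m : ℝ) - r), k.cast_nonneg (α := ℝ), m.cast_nonneg (α := ℝ),
    r.cast_nonneg (α := ℝ)]

namespace GnkmRel

variable {k m r : ℕ}

lemma mulVec_inl (v : Fin k ⊕ Fin m ⊕ Fin r → ℂ) (i : Fin k) :
    ((adjMatD (GnkmRel k m r)).map Complex.ofReal *ᵥ v) (Sum.inl i) =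
      ∑ b, v b - v (Sum.inl i) := by
  simp [mulVec, dotProduct, adjMatD, GnkmRel, apply_ite Complex.ofReal,
    Fintype.sum_ite_eq_zero_else, Fintype.sum_sum_type]

lemma mulVec_inr_inl (v : Fin k ⊕ Fin m ⊕ Fin r → ℂ) (y : Fin m) :
    ((adjMatD (GnkmRel k m r)).map Complex.ofReal *ᵥ v) (Sum.inr (Sum.inl y)) =
      ∑ b, v b - v (Sum.inr (Sum.inl y)) := by
  simp [mulVec, dotProduct, adjMatD, GnkmRel, apply_ite Complex.ofReal,
    Fintype.sum_ite_eq_zero_else, Fintype.sum_sum_type]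

lemma mulVec_inr_inr (v : Fin k ⊕ Fin m ⊕ Fin r → ℂ) (z : Fin r) :
    ((adjMatD (GnkmRel k m r)).map Complex.ofReal *ᵥ v) (Sum.inr (Sum.inr z)) =
      ∑ b, v b - v (Sum.inr (Sum.inr z)) - ∑ y, v (Sum.inr (Sum.inl y)) := by
  simp [mulVec, dotProduct, adjMatD, GnkmRel, apply_ite Complex.ofReal,
    Fintype.sum_ite_eq_zero_else, Fintype.sum_sum_type, add_sub_assoc]

/-- For an eigenvector `v`, the sums `S = ∑ v` and `T` of `v` over the second part satisfy
`(μ + 1) T = m S` and `(μ + 1) S = (k + m) S + r (S - T)`, and `S ≠ 0` unless `μ = -1`. -/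
theorem eigenvalue_eq_neg_one_or {μ : ℂ}
    (hμ : HasEigenvalue (toLin' ((adjMatD (GnkmRel k m r)).map Complex.ofReal)) μ) :
    μ = -1 ∨ (μ + 1) ^ 2 - (k + m + r) * (μ + 1) + m * r = 0 := by
  obtain ⟨v, hv, hv0⟩ := hμ.exists_hasEigenvector
  rw [mem_eigenspace_iff, toLin'_apply] at hv
  have heig (a) : _ = μ * v a := congrFun hv a
  refine or_iff_not_imp_left.2 fun hμ₁ => ?_
  have hx : μ + 1 ≠ 0 := fun h => hμ₁ (eq_neg_of_add_eq_zero_left h)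
  set S := ∑ b, v b with hSdef
  set T := ∑ y, v (Sum.inr (Sum.inl y)) with hTdef
  have hK (i) : (μ + 1) * v (Sum.inl i) = S := by
    linear_combination mulVec_inl v i - heig _
  have hM (y) : (μ + 1) * v (Sum.inr (Sum.inl y)) = S := by
    linear_combination mulVec_inr_inl v y - heig _
  have hR (z) : (μ + 1) * v (Sum.inr (Sum.inr z)) = S - T := by
    linear_combination mulVec_inr_inr v z - heig _
  have hT : (μ + 1) * T = m * S := by
    simp [hTdef, Finset.mul_sum, hM]
  have hS : (μ + 1) * S = k * S + m * S + r * (S - T) := by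
    conv_lhs => rw [hSdef, Fintype.sum_sum_type, Fintype.sum_sum_type]
    simp only [mul_add, Finset.mul_sum, hK, hM, hR, Finset.sum_const, Finset.card_univ,
      Fintype.card_fin, nsmul_eq_mul]
    ring
  have hS0 : S ≠ 0 := by
    intro hS0
    have hT0 : T = 0 := by simpa [hS0, hx] using hT
    refine hv0 (funext fun a => ?_)
    rcases a with i | y | z
    · simpa [hS0, hx] using hK i
    · simpa [hS0, hx] using hM y
    · simpa [hS0, hT0, hx] using hR z
  refine (mul_eq_zero.1 ?_).resolve_left hS0
  linear_combination (μ + 1) * hS - r * hT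

/-- The eigenvector takes the value `μ + 1` on the first two parts and `μ + 1 - m` on the
third. -/
theorem hasEigenvalue_of_quadratic {μ : ℂ} (hx : μ + 1 ≠ 0)
    (hq : (μ + 1) ^ 2 - (k + m + r) * (μ + 1) + m * r = 0) :
    HasEigenvalue (toLin' ((adjMatD (GnkmRel k m r)).map Complex.ofReal)) μ := by
  set v : Fin k ⊕ Fin m ⊕ Fin r → ℂ :=
    Sum.elim (fun _ => μ + 1) (Sum.elim (fun _ => μ + 1) (fun _ => μ + 1 - m)) with hv
  have hsum : ∑ b, v b = (μ + 1) ^ 2 := by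
    simp only [hv, Fintype.sum_sum_type, Sum.elim_inl, Sum.elim_inr, Finset.sum_const,
      Finset.card_univ, Fintype.card_fin, nsmul_eq_mul]
    linear_combination -hq
  have hv0 : v ≠ 0 := fun h => hx (pow_eq_zero_iff two_ne_zero |>.1 (by simp [← hsum, h]))
  refine hasEigenvalue_of_hasEigenvector ⟨mem_eigenspace_iff.2 ?_, hv0⟩
  rw [toLin'_apply]
  ext (i | y | z)
  · rw [mulVec_inl, hsum]; simp only [hv, Sum.elim_inl, Pi.smul_apply, smul_eq_mul]; ring
  · rw [mulVec_inr_inl, hsum]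
    simp only [hv, Sum.elim_inr, Sum.elim_inl, Pi.smul_apply, smul_eq_mul]; ring
  · rw [mulVec_inr_inr, hsum]
    simp only [hv, Sum.elim_inr, Sum.elim_inl, Finset.sum_const, Finset.card_univ,
      Fintype.card_fin, nsmul_eq_mul, Pi.smul_apply, smul_eq_mul]
    ring

theorem specRadC_adjMatD (hN : 4 ≤ k + m + r) :
    specRadC (adjMatD (GnkmRel k m r)) =
      ((k + m + r : ℝ) - 2 + √((k + m + r : ℝ) ^ 2 - 4 * m * r)) / 2 := by
  set N : ℝ := k + m + r with hNdef
  set s := √(N ^ 2 - 4 * m * r)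
  have hN4 : (4 : ℝ) ≤ N := by rw [hNdef]; exact_mod_cast hN
  have hs0 : 0 ≤ s := Real.sqrt_nonneg _
  have hs : s ^ 2 = N ^ 2 - 4 * m * r :=
    Real.sq_sqrt (sub_nonneg.2 (four_mul_le_sq_add_add k m r))
  have hfactor (x : ℂ) : x ^ 2 - (k + m + r) * x + m * r =
      (x - ((N + s) / 2 : ℝ)) * (x - ((N - s) / 2 : ℝ)) := by
    have hsC : (s : ℂ) ^ 2 = N ^ 2 - 4 * m * r := by exact_mod_cast congrArg Complex.ofReal hs
    push_cast [hNdef] at hsC ⊢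
    linear_combination (1 / 4 : ℂ) * hsC
  have hroot : (((N - 2 + s) / 2 : ℝ) : ℂ) + 1 = ((N + s) / 2 : ℝ) := by push_cast; ring
  refine IsGreatest.csSup_eq
    ⟨⟨_, hasEigenvalue_of_quadratic (μ := ((N - 2 + s) / 2 : ℝ)) ?_ ?_, ?_⟩, ?_⟩
  · rw [hroot]; exact_mod_cast (by linarith : (N + s) / 2 ≠ 0)
  · rw [hfactor, hroot, sub_self, zero_mul]
  · rw [Complex.norm_real, Real.norm_of_nonneg (by linarith)]
  · rintro _ ⟨μ, hμ, rfl⟩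
    rcases eigenvalue_eq_neg_one_or hμ with rfl | hq
    · rw [norm_neg, norm_one]; linarith
    rw [hfactor, mul_eq_zero, sub_eq_zero, sub_eq_zero] at hq
    rcases hq with h | h <;>
    · rw [eq_sub_of_add_eq h, ← Complex.ofReal_one, ← Complex.ofReal_sub, Complex.norm_real,
        Real.norm_eq_abs, abs_le]
      constructor <;> linarith

end GnkmRel

theorem stmt12_general (n k : ℕ) :
    ∀ m : ℕ, 2 ≤ m → m + 2 ≤ n - k →
      specRadC (adjMatD (GnkmRel k m (n - k - m))) =
        ((n : ℝ) - 2 +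
          Real.sqrt (4 * (m : ℝ) ^ 2 - 4 * ((n : ℝ) - k) * m + (n : ℝ) ^ 2)) / 2 ∧
      specRadC (adjMatD (GnkmRel k m (n - k - m))) ≤
        ((n : ℝ) - 2 + Real.sqrt (((n : ℝ) - 4) ^ 2 + 8 * k)) / 2 ∧
      (specRadC (adjMatD (GnkmRel k m (n - k - m))) =
          ((n : ℝ) - 2 + Real.sqrt (((n : ℝ) - 4) ^ 2 + 8 * k)) / 2 ↔
        m = 2 ∨ m = n - k - 2) := by
  intro m hm hmn
  obtain ⟨r, hr, rfl⟩ : ∃ r, 2 ≤ r ∧ n = k + m + r := ⟨n - k - m, by omega, by omega⟩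
  rw [show k + m + r - k - m = r by omega, show m = k + m + r - k - 2 ↔ r = 2 by omega,
    GnkmRel.specRadC_adjMatD (by omega)]
  push_cast
  have hgap : ((k + m + r : ℝ) - 4) ^ 2 + 8 * k =
      (k + m + r : ℝ) ^ 2 - 4 * m * r + 4 * ((m - 2) * (r - 2)) := by ring
  have hgap₀ : 0 ≤ ((m : ℝ) - 2) * ((r : ℝ) - 2) :=
    mul_nonneg (sub_nonneg.2 (by exact_mod_cast hm)) (sub_nonneg.2 (by exact_mod_cast hr))
  refine ⟨by ring_nf, by rw [hgap]; gcongr; linarith, ?_⟩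
  rw [div_left_inj' two_ne_zero, add_right_inj,
    Real.sqrt_inj (sub_nonneg.2 (four_mul_le_sq_add_add k m r)) (by positivity), hgap,
    left_eq_add, mul_eq_zero_iff_left four_ne_zero, mul_eq_zero, sub_eq_zero, sub_eq_zero]
  norm_cast

theorem stmt12 (n k : ℕ) (hk : 1 ≤ k) (hn : k + 4 ≤ n) :
    ∀ m : ℕ, 2 ≤ m → m + 2 ≤ n - k →
      specRadC (adjMatD (GnkmRel k m (n - k - m))) =
        ((n : ℝ) - 2 +
          Real.sqrt (4 * (m : ℝ) ^ 2 - 4 * ((n : ℝ) - k) * m + (n : ℝ) ^ 2)) / 2 ∧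
      specRadC (adjMatD (GnkmRel k m (n - k - m))) ≤
        ((n : ℝ) - 2 + Real.sqrt (((n : ℝ) - 4) ^ 2 + 8 * k)) / 2 ∧
      (specRadC (adjMatD (GnkmRel k m (n - k - m))) =
          ((n : ℝ) - 2 + Real.sqrt (((n : ℝ) - 4) ^ 2 + 8 * k)) / 2 ↔
        m = 2 ∨ m = n - k - 2) :=
  stmt12_general n k
end

section
/- For every non-complete simple graph G, the algebraic connectivity satisfies μ_2(G) ≤ κ(G). -/
open Matrix BigOperators

/-- The degree of a vertex. -/
noncomputable def deg {V : Type*} [Fintype V] (G : SimpleGraph V) (v : V) : ℕ :=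
  (G.neighborSet v).ncard

/-- The Laplacian matrix `D - A`. -/
noncomputable def lapMat {V : Type*} [Fintype V] [DecidableEq V] (G : SimpleGraph V) :
    Matrix V V ℝ :=
  Matrix.diagonal (fun v => ((deg G v : ℝ))) - adjMat G

/-- The algebraic connectivity `μ₂(G)`: the second smallest Laplacian eigenvalue, via the
Courant–Fischer characterization as the minimum of the Rayleigh quotient over unit vectors
orthogonal to the all-ones vector. -/
noncomputable def mu2 {n : ℕ} (G : SimpleGraph (Fin n)) : ℝ :=
  sInf {r : ℝ | ∃ x : Fin n → ℝ,
    (∑ v, (x v) ^ 2 = 1) ∧ (∑ v, x v = 0) ∧ r = x ⬝ᵥ (lapMat G *ᵥ x)}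

/-- Reachability from `u` to `v` by a path staying inside the set `T`. -/
def gReachIn {V : Type*} (G : SimpleGraph V) (T : Set V) (u v : V) : Prop :=
  Relation.ReflTransGen (fun a b => a ∈ T ∧ b ∈ T ∧ G.Adj a b) u v

/-- `S` is a vertex cut: `G - S` is disconnected. -/
def IsCutG {V : Type*} (G : SimpleGraph V) (S : Finset V) : Prop :=
  ∃ u v : V, u ∉ S ∧ v ∉ S ∧ ¬ gReachIn G {x | x ∉ S} u v

/-- The vertex connectivity of `G`: the minimum size of a vertex cut. -/
noncomputable def vconn {V : Type*} [Fintype V] (G : SimpleGraph V) : ℕ :=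
  sInf {s : ℕ | ∃ S : Finset V, S.card = s ∧ IsCutG G S}

/-! Take a minimum vertex cut `S` and split `V \ S` into the vertices `A` reachable from a fixed
vertex outside `S` and the rest `B`. The test vector equal to `|B|` on `A`, `-|A|` on `B` and `0`
on `S` is orthogonal to the constant vector, and since no edge joins `A` to `B`, its Laplacian
form only sees edges at `S`, so its Rayleigh quotient is at most `|S|`. -/

open Finset

section Laplacian

variable {V : Type*} [Fintype V] (G : SimpleGraph V)

theorem deg_eq_degree [DecidableRel G.Adj] (v : V) : deg G v = G.degree v := by
  rw [deg, Set.ncard_eq_toFinset_card', ← SimpleGraph.card_neighborSet_eq_degree,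
    Set.toFinset_card]

variable [DecidableEq V]

theorem lapMat_eq_lapMatrix [DecidableRel G.Adj] : lapMat G = G.lapMatrix ℝ := by
  ext v w
  simp only [lapMat, adjMat, SimpleGraph.lapMatrix, SimpleGraph.degMatrix, Matrix.sub_apply,
    of_apply, SimpleGraph.adjMatrix_apply, deg_eq_degree]
  congr

theorem dotProduct_lapMat_mulVec [DecidableRel G.Adj] (x : V → ℝ) :
    x ⬝ᵥ (lapMat G *ᵥ x) = (∑ i, ∑ j, if G.Adj i j then (x i - x j) ^ 2 else 0) / 2 := by
  rw [lapMat_eq_lapMatrix, ← toLinearMap₂'_apply', SimpleGraph.lapMatrix_toLinearMap₂']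

theorem dotProduct_lapMat_mulVec_nonneg (x : V → ℝ) : 0 ≤ x ⬝ᵥ (lapMat G *ᵥ x) := by
  classical
  rw [dotProduct_lapMat_mulVec]
  positivity

-- Edges off `S` contribute nothing, and an edge `vw` with `v ∈ S` contributes `x w ^ 2`.
theorem dotProduct_lapMat_mulVec_le (S : Finset V) (x : V → ℝ) (hS : ∀ v ∈ S, x v = 0)
    (hconst : ∀ v w, v ∉ S → w ∉ S → G.Adj v w → x v = x w) :
    x ⬝ᵥ (lapMat G *ᵥ x) ≤ #S * ∑ v, x v ^ 2 := by
  classical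
  set χ : V → ℝ := fun v => if v ∈ S then 1 else 0
  have hterm : ∀ v w, (if G.Adj v w then (x v - x w) ^ 2 else 0)
      ≤ χ v * x w ^ 2 + χ w * x v ^ 2 := by
    intro v w
    simp only [χ]
    split_ifs <;> simp_all [hconst v w] <;> positivity
  have hχ : ∑ v, χ v = #S := by simp [χ]
  have hsum : ∑ v, ∑ w, (χ v * x w ^ 2 + χ w * x v ^ 2) = 2 * (#S * ∑ v, x v ^ 2) := by
    rw [← hχ, sum_mul_sum]
    simp only [sum_add_distrib]
    rw [sum_comm (f := fun v w => χ w * x v ^ 2)]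
    ring
  rw [dotProduct_lapMat_mulVec]
  have := sum_le_sum fun v (_ : v ∈ univ) => sum_le_sum fun w (_ : w ∈ univ) => hterm v w
  linarith

end Laplacian

theorem mu2_le_dotProduct_lapMat_mulVec_div {n : ℕ} (G : SimpleGraph (Fin n))
    {y : Fin n → ℝ} (hy : y ≠ 0) (hsum : ∑ v, y v = 0) :
    mu2 G ≤ y ⬝ᵥ (lapMat G *ᵥ y) / ∑ v, y v ^ 2 := by
  set s := ∑ v, y v ^ 2
  have hs : 0 < s := by
    obtain ⟨v, hv⟩ := Function.ne_iff.1 hy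
    exact sum_pos' (fun _ _ => sq_nonneg _) ⟨v, mem_univ v, pow_two_pos_of_ne_zero hv⟩
  set c := (√s)⁻¹
  have hc : c ^ 2 = s⁻¹ := by rw [inv_pow, Real.sq_sqrt hs.le]
  refine csInf_le ⟨0, ?_⟩ ⟨c • y, ?_, ?_, ?_⟩
  · rintro r ⟨x, -, -, rfl⟩
    exact dotProduct_lapMat_mulVec_nonneg G x
  · simp only [Pi.smul_apply, smul_eq_mul, mul_pow, ← mul_sum, hc]
    exact inv_mul_cancel₀ hs.ne'
  · simp only [Pi.smul_apply, smul_eq_mul, ← mul_sum, hsum, mul_zero]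
  · rw [mulVec_smul, dotProduct_smul, smul_dotProduct, smul_eq_mul, smul_eq_mul, ← mul_assoc,
      ← sq, hc, inv_mul_eq_div]

section Balanced

variable {V : Type*} [DecidableEq V]

def balancedVec (A B : Finset V) (z : V) : ℝ :=
  (if z ∈ A then (#B : ℝ) else 0) - (if z ∈ B then (#A : ℝ) else 0)

theorem sum_balancedVec [Fintype V] (A B : Finset V) : ∑ z, balancedVec A B z = 0 := by
  simp [balancedVec, sum_sub_distrib, mul_comm]

theorem balancedVec_ne_zero {A B : Finset V} (hAB : Disjoint A B) (hA : A.Nonempty)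
    (hB : B.Nonempty) : balancedVec A B ≠ 0 := by
  obtain ⟨a, ha⟩ := hA
  refine Function.ne_iff.2 ⟨a, ?_⟩
  simp [balancedVec, ha, disjoint_left.1 hAB ha, hB.ne_empty]

end Balanced

theorem gReachIn_iff_of_adj {V : Type*} {G : SimpleGraph V} {T : Set V} {u a b : V}
    (ha : a ∈ T) (hb : b ∈ T) (hab : G.Adj a b) : gReachIn G T u a ↔ gReachIn G T u b :=
  ⟨fun h => h.tail ⟨ha, hb, hab⟩, fun h => h.tail ⟨hb, ha, hab.symm⟩⟩

theorem mu2_le_card_of_isCutG {n : ℕ} (G : SimpleGraph (Fin n)) {S : Finset (Fin n)}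
    (hS : IsCutG G S) : mu2 G ≤ #S := by
  classical
  obtain ⟨u, v, hu, hv, huv⟩ := hS
  set R := gReachIn G {x | x ∉ S} u
  set A := univ.filter fun z => z ∉ S ∧ R z
  set B := univ.filter fun z => z ∉ S ∧ ¬R z
  set y := balancedVec A B
  have hy : y ≠ 0 := by
    refine balancedVec_ne_zero (disjoint_filter.2 fun z _ hA hB => hB.2 hA.2)
      ⟨u, mem_filter.2 ⟨mem_univ u, hu, .refl⟩⟩ ⟨v, mem_filter.2 ⟨mem_univ v, hv, huv⟩⟩
  have hyS : ∀ z ∈ S, y z = 0 := by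
    intro z hz
    simp [y, balancedVec, A, B, hz]
  have hyconst : ∀ a b, a ∉ S → b ∉ S → G.Adj a b → y a = y b := by
    intro a b ha hb hab
    have hR : R a ↔ R b := gReachIn_iff_of_adj (T := {x | x ∉ S}) ha hb hab
    simp [y, balancedVec, A, B, ha, hb, hR]
  calc mu2 G ≤ y ⬝ᵥ (lapMat G *ᵥ y) / ∑ z, y z ^ 2 :=
        mu2_le_dotProduct_lapMat_mulVec_div G hy (sum_balancedVec A B)
    _ ≤ #S := by
      refine div_le_of_le_mul₀ (sum_nonneg fun _ _ => sq_nonneg _) (Nat.cast_nonneg _) ?_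
      exact dotProduct_lapMat_mulVec_le G S y hyS hyconst

theorem isCutG_compl_pair {V : Type*} [Fintype V] [DecidableEq V] {G : SimpleGraph V}
    {u v : V} (huv : u ≠ v) (hadj : ¬G.Adj u v) : IsCutG G (univ \ {u, v}) := by
  refine ⟨u, v, by simp, by simp, fun h => huv ?_⟩
  suffices ∀ z, gReachIn G {x | x ∉ univ \ {u, v}} u z → z = u from (this v h).symm
  intro z hz
  induction hz with
  | refl => rfl
  | @tail b c _ hstep ih =>
    obtain ⟨-, hc, hbc⟩ := hstep
    rw [ih] at hbc
    by_contra hcu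
    have hcv : c = v := by simpa [hcu] using hc
    exact hadj (hcv ▸ hbc)

theorem exists_isCutG_card_eq_vconn {V : Type*} [Fintype V] (G : SimpleGraph V)
    (hnc : ∃ u v : V, u ≠ v ∧ ¬G.Adj u v) : ∃ S : Finset V, IsCutG G S ∧ #S = vconn G := by
  classical
  obtain ⟨u, v, huv, hadj⟩ := hnc
  obtain ⟨S, hcard, hS⟩ : vconn G ∈ {s | ∃ S : Finset V, #S = s ∧ IsCutG G S} :=
    Nat.sInf_mem ⟨_, _, rfl, isCutG_compl_pair huv hadj⟩
  exact ⟨S, hS, hcard⟩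

/-- Fiedler: for every non-complete graph, `μ₂(G) ≤ κ(G)`. -/
theorem stmt18 {n : ℕ} (G : SimpleGraph (Fin n))
    (hnc : ∃ u v : Fin n, u ≠ v ∧ ¬ G.Adj u v) :
    mu2 G ≤ (vconn G : ℝ) := by
  obtain ⟨S, hS, hcard⟩ := exists_isCutG_card_eq_vconn G hnc
  exact hcard ▸ mu2_le_card_of_isCutG G hS
end
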